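/- Let X be a Banach space and Y ⊆ X a closed subspace. If Q_Y : X → X/Y is the quotient map, then (Q_Y**)⁻¹(J_{X/Y}(X/Y)) = J_X(X) + Y^{⊥⊥} inside X**; in particular J_X(X) + Y^{⊥⊥} is a closed subspace of X**. -/

import Mathlib

open NormedSpace Filter Topology
open scoped ENNReal

noncomputable section

/-- The topological dual of a normed space (the older library's `NormedSpace.Dual`, removed since). -/
abbrev NormedSpace.Dual (𝕜 : Type*) [NontriviallyNormedField 𝕜] (E : Type*) [SeminormedAddCommGroup E]
    [NormedSpace 𝕜 E] : Type _ := E →L[𝕜] 𝕜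

/-- The annihilator of a subspace `Y ⊆ X` inside the continuous dual of `X`. -/
def annih {X : Type*} [SeminormedAddCommGroup X] [NormedSpace ℝ X] (Y : Submodule ℝ X) :
    Submodule ℝ (Dual ℝ X) where
  carrier := {f | ∀ y ∈ Y, f y = 0}
  add_mem' := by
    intro a b ha hb y hy
    simp [ContinuousLinearMap.add_apply, ha y hy, hb y hy]
  zero_mem' := by intro y hy; rfl
  smul_mem' := by
    intro c f hf y hy
    simp [hf y hy]

/-- A Banach space is reflexive iff the canonical embedding into its bidual is surjective. -/
def BReflexive (X : Type*) [SeminormedAddCommGroup X] [NormedSpace ℝ X] : Prop :=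
  Function.Surjective (inclusionInDoubleDual ℝ X)

/-- A Banach space is coreflexive iff `X**/J_X(X)` is reflexive. -/
def Coreflexive (X : Type*) [SeminormedAddCommGroup X] [NormedSpace ℝ X] : Prop :=
  BReflexive ((Dual ℝ (Dual ℝ X)) ⧸ LinearMap.range (inclusionInDoubleDual ℝ X).toLinearMap)

/-- The adjoint of a continuous linear map between normed spaces. -/
def adj {E F : Type*} [SeminormedAddCommGroup E] [NormedSpace ℝ E]
    [SeminormedAddCommGroup F] [NormedSpace ℝ F] (f : E →L[ℝ] F) :
    Dual ℝ F →L[ℝ] Dual ℝ E :=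
  (ContinuousLinearMap.compL ℝ E F ℝ).flip f

/-- `X` is weak*-sequentially dense in its bidual. -/
def WStarSeqDense (X : Type*) [SeminormedAddCommGroup X] [NormedSpace ℝ X] : Prop :=
  ∀ F : Dual ℝ (Dual ℝ X), ∃ x : ℕ → X, ∀ f : Dual ℝ X,
    Tendsto (fun n => inclusionInDoubleDual ℝ X (x n) f) atTop (𝓝 (F f))

/-- `x` is a point of weak-to-norm continuity of the closed unit ball of `X`. -/
def wPC (X : Type*) [SeminormedAddCommGroup X] [NormedSpace ℝ X] (x : X) : Prop :=
  ∀ l : Filter X, (∀ᶠ y in l, ‖y‖ ≤ 1) →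
    (∀ f : Dual ℝ X, Tendsto (fun y => f y) l (𝓝 (f x))) →
    Tendsto id l (𝓝 x)
def mkQL {X : Type*} [NormedAddCommGroup X] [NormedSpace ℝ X] (Y : Submodule ℝ X) :
    X →L[ℝ] X ⧸ Y := ⟨Y.mkQ, continuous_quot_mk⟩

/-- Lift of a functional vanishing on `Y` to a continuous functional on `X ⧸ Y`. -/
def liftD {X : Type*} [NormedAddCommGroup X] [NormedSpace ℝ X]
    (Y : Submodule ℝ X) (f : Dual ℝ X) (hf : ∀ y ∈ Y, f y = 0) : Dual ℝ (X ⧸ Y) :=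
  LinearMap.mkContinuous (Y.liftQ (f : X →ₗ[ℝ] ℝ)
    (fun y hy => by simpa using hf y hy)) ‖f‖ (by
      intro z
      refine le_of_forall_pos_le_add fun ε hε => ?_
      have hε' : (0:ℝ) < ε / (‖f‖ + 1) := div_pos hε (by positivity)
      obtain ⟨m, hm, hlt⟩ := Submodule.Quotient.norm_mk_lt z hε'
      have hfm : Y.liftQ (f : X →ₗ[ℝ] ℝ) (fun y hy => by simpa using hf y hy) z = f m := by
        rw [← hm]; rfl
      rw [hfm]
      have h1 : ‖f m‖ ≤ ‖f‖ * ‖m‖ := f.le_opNorm m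
      have h2 : ‖f‖ * ‖m‖ ≤ ‖f‖ * (‖z‖ + ε / (‖f‖ + 1)) :=
        mul_le_mul_of_nonneg_left hlt.le (norm_nonneg f)
      have h3 : ‖f‖ * (ε / (‖f‖ + 1)) ≤ ε := by
        rw [mul_div_assoc']
        rw [div_le_iff₀ (by positivity)]
        nlinarith [norm_nonneg f, hε.le]
      nlinarith)

theorem stmt14 (X : Type*) [NormedAddCommGroup X] [NormedSpace ℝ X] [CompleteSpace X]
    (Y : Submodule ℝ X) (hY : IsClosed (Y : Set X)) :
    Submodule.comap ((adj (adj (mkQL Y))) :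
        Dual ℝ (Dual ℝ X) →L[ℝ] Dual ℝ (Dual ℝ (X ⧸ Y))).toLinearMap
        (LinearMap.range (inclusionInDoubleDual ℝ (X ⧸ Y)).toLinearMap) =
      LinearMap.range (inclusionInDoubleDual ℝ X).toLinearMap ⊔ annih (annih Y) ∧
    IsClosed ((LinearMap.range (inclusionInDoubleDual ℝ X).toLinearMap ⊔ annih (annih Y) :
      Submodule ℝ (Dual ℝ (Dual ℝ X))) : Set (Dual ℝ (Dual ℝ X))) := by
  haveI : IsClosed (Y : Set X) := hY
  have key : Submodule.comap ((adj (adj (mkQL Y))) :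
        Dual ℝ (Dual ℝ X) →L[ℝ] Dual ℝ (Dual ℝ (X ⧸ Y))).toLinearMap
        (LinearMap.range (inclusionInDoubleDual ℝ (X ⧸ Y)).toLinearMap) =
      LinearMap.range (inclusionInDoubleDual ℝ X).toLinearMap ⊔ annih (annih Y) := by
    apply le_antisymm
    · rintro F hF
      obtain ⟨z, hz⟩ : ∃ z, inclusionInDoubleDual ℝ (X ⧸ Y) z = adj (adj (mkQL Y)) F := hF
      obtain ⟨x, rfl⟩ := Submodule.mkQ_surjective Y z
      refine Submodule.mem_sup.mpr ⟨inclusionInDoubleDual ℝ X x, ⟨x, rfl⟩,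
        F - inclusionInDoubleDual ℝ X x, ?_, by abel⟩
      intro f hf
      have hcomp : (liftD Y f hf).comp (mkQL Y) = f := by
        ext x; rfl
      have h1 : F f = F ((liftD Y f hf).comp (mkQL Y)) := by rw [hcomp]
      have h2 : F ((liftD Y f hf).comp (mkQL Y)) = adj (adj (mkQL Y)) F (liftD Y f hf) := rfl
      have h3 : adj (adj (mkQL Y)) F (liftD Y f hf)
          = inclusionInDoubleDual ℝ (X ⧸ Y) (Y.mkQ x) (liftD Y f hf) := by rw [hz]
      have h4 : inclusionInDoubleDual ℝ (X ⧸ Y) (Y.mkQ x) (liftD Y f hf) = f x := by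
        rw [dual_def]; exact DFunLike.congr_fun hcomp x
      simp only [ContinuousLinearMap.sub_apply, dual_def, h1, h2, h3, h4, sub_self]
    · rw [sup_le_iff]
      constructor
      · rintro _ ⟨x, rfl⟩
        refine ⟨Y.mkQ x, ?_⟩
        ext g
        rfl
      · intro F hF
        refine ⟨0, ?_⟩
        ext g
        have : g.comp (mkQL Y) ∈ annih Y := by
          intro y hy
          have : (mkQL Y) y = 0 := (Submodule.Quotient.mk_eq_zero Y).mpr hy
          simp only [ContinuousLinearMap.comp_apply, this, map_zero]
        simp only [map_zero]
        exact (hF _ this).symm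
  refine ⟨key, ?_⟩
  rw [← key]
  have hcl : IsClosed ((LinearMap.range (inclusionInDoubleDual ℝ (X ⧸ Y)).toLinearMap :
      Submodule ℝ (Dual ℝ (Dual ℝ (X ⧸ Y)))) : Set (Dual ℝ (Dual ℝ (X ⧸ Y)))) := by
    have hiso : Isometry (inclusionInDoubleDual ℝ (X ⧸ Y)) :=
      (inclusionInDoubleDualLi ℝ (E := X ⧸ Y)).isometry
    have h := hiso.isClosedEmbedding.isClosed_range
    rw [LinearMap.coe_range]; exact h
  exact hcl.preimage (adj (adj (mkQL Y))).continuous
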